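/- A left-invariant connection on Aff₀(ℝ) cannot have three special markings. Precisely: with constants (α,δ), (α',δ'), (α'',δ'') attached to three distinct markings, one has α'' = (αα' − 1 − 4δδ' + 2δ + 2δ')/(2 − 2δ − 2δ' + α + α') and δ'' = (1 − δα' − αδ' + αα' + α + α' − δ − δ')/(2 − 2δ − 2δ' + α + α'); if two markings are of Type I (δ = δ' = 1), then α'' = δ'', and if the third marking were special of Type II this would force n = −1, contradicting n ≥ 1; if two markings are of Type II (δ = 1+α, δ' = 1+α'), then 3δ'' = α'' + 1, forcing (α'',δ'') = (−1,0) or (2,1), both contradicting the constraints n ∈ ½ℤ, n ≥ 1. -/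

import Mathlib

noncomputable section

abbrev Pl := ℝ × ℝ

/-- The generator `X` of `𝔞 = ⟨X,Y : [X,Y]=Y⟩`, in coordinates. -/
def Xv : Pl := (1, 0)
/-- The generator `Y` of `𝔞 = ⟨X,Y : [X,Y]=Y⟩`, in coordinates. -/
def Yv : Pl := (0, 1)

/-- `X + lY` is a *special marking* of the left-invariant connection `D`:
writing `Z = X + lY`, one has `D Z Z = aZ` and `D Z Y = gZ + dY` with
`a = −1/n` and either `d = 1` (Type I₀(n)) or `d = 1 + a` (Type II₀(n)), for
some `n ∈ ½ℤ`, `n ≥ 1`. -/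
def SpecialMarking (D : Pl →ₗ[ℝ] Pl →ₗ[ℝ] Pl) (l : ℝ) : Prop :=
  ∃ a d n : ℝ, (∃ m : ℤ, n = m / 2) ∧ 1 ≤ n ∧ a = -1 / n ∧
    (d = 1 ∨ d = 1 + a) ∧
    D (Xv + l • Yv) (Xv + l • Yv) = a • (Xv + l • Yv) ∧
    ∃ g : ℝ, D (Xv + l • Yv) Yv = g • (Xv + l • Yv) + d • Yv

/-!
For `Z = X + lY` everything is polynomial in `l`: `∇_Z Z ∥ Z` says that `l` is a root of a
cubic, and `α(∇, Z)`, `δ(∇, Z)` are quadratics in `l`. Two of three special markings have the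
same type, so `δ - 1` (type I) or `δ - 1 - α` (type II) vanishes at two roots; with Vieta's
formulas for the cubic this expresses the connection through `ε` and the three roots. At the
third root one gets `δ = α` for a type I pair, and `3δ = α + 1`, `δ = ε (l₃ - l₁)(l₃ - l₂)` for
a type II pair; neither is compatible with `α < 0` and a third special type unless `ε = 0`,
and then also `γ = φ = 0`.
-/

theorem quadratic_coeffs_of_two_roots {R : Type*} [CommRing R] [IsDomain R] {a b c x y : R}
    (hxy : x ≠ y) (hx : a * x ^ 2 + b * x + c = 0) (hy : a * y ^ 2 + b * y + c = 0) :
    b = -a * (x + y) ∧ c = a * x * y := by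
  have hb : b = -a * (x + y) :=
    mul_left_cancel₀ (sub_ne_zero.2 hxy) (by linear_combination hx - hy)
  exact ⟨hb, by linear_combination hx - x * hb⟩

theorem cubic_coeffs_of_three_roots {R : Type*} [CommRing R] [IsDomain R] {a b c d x y z : R}
    (hxy : x ≠ y) (hxz : x ≠ z) (hyz : y ≠ z)
    (hx : a * x ^ 3 + b * x ^ 2 + c * x + d = 0) (hy : a * y ^ 3 + b * y ^ 2 + c * y + d = 0)
    (hz : a * z ^ 3 + b * z ^ 2 + c * z + d = 0) :
    b = -a * (x + y + z) ∧ c = a * (x * y + x * z + y * z) := by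
  have hxy' : a * (x ^ 2 + x * y + y ^ 2) + b * (x + y) + c = 0 :=
    mul_left_cancel₀ (sub_ne_zero.2 hxy) (by linear_combination hx - hy)
  have hxz' : a * (x ^ 2 + x * z + z ^ 2) + b * (x + z) + c = 0 :=
    mul_left_cancel₀ (sub_ne_zero.2 hxz) (by linear_combination hx - hz)
  have hb : b = -a * (x + y + z) :=
    mul_left_cancel₀ (sub_ne_zero.2 hyz) (by linear_combination hxy' - hxz')
  exact ⟨hb, by linear_combination hxy' - (x + y) * hb⟩

section Invariants

/- `markingAlpha l`, `markingDelta l` are the invariants `α(∇, Z)`, `δ(∇, Z)` of `Z = X + lY`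
for the connection whose coefficients `α, …, φ` are those of `stmt19`. -/
variable (α β γ δ ε φ : ℝ)

def markingAlpha (l : ℝ) : ℝ := α + 2 * γ * l + ε * l ^ 2

def markingDelta (l : ℝ) : ℝ := δ + (φ - γ) * l - ε * l ^ 2

/-- `Z = X + lY` satisfies `∇_Z Z ∥ Z` iff `l` is a root of this cubic, and then
`∇_Z Z = (markingAlpha l) Z`. -/
def markingCubic (l : ℝ) : ℝ := ε * l ^ 3 + (2 * γ - φ) * l ^ 2 + (α - 2 * δ + 1) * l - β

def IsSpecialRoot (l : ℝ) : Prop :=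
  markingCubic α β γ δ ε φ l = 0 ∧ markingAlpha α γ ε l < 0 ∧
    (markingDelta γ δ ε φ l = 1 ∨ markingDelta γ δ ε φ l = 1 + markingAlpha α γ ε l)

end Invariants

theorem SpecialMarking.isSpecialRoot {D : Pl →ₗ[ℝ] Pl →ₗ[ℝ] Pl} {α β γ δ ε φ l : ℝ}
    (h1 : D Xv Xv = α • Xv + β • Yv) (h2 : D Xv Yv = γ • Xv + δ • Yv)
    (h3 : D Yv Xv = D Xv Yv - Yv) (h4 : D Yv Yv = ε • Xv + φ • Yv)
    (hl : SpecialMarking D l) : IsSpecialRoot α β γ δ ε φ l := by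
  obtain ⟨a, d, n, -, hn, rfl, htype, hZZ, g, hZY⟩ := hl
  simp only [map_add, map_smul, LinearMap.add_apply, LinearMap.smul_apply, h1, h2, h3, h4]
    at hZZ hZY
  simp only [Xv, Yv, Prod.smul_mk, Prod.mk_add_mk, Prod.mk_sub_mk, Prod.ext_iff, smul_eq_mul]
    at hZZ hZY
  obtain ⟨hZZX, hZZY⟩ := hZZ
  obtain ⟨hZYX, hZYY⟩ := hZY
  have ha : markingAlpha α γ ε l = -1 / n := by
    unfold markingAlpha; linear_combination hZZX
  have hd : markingDelta γ δ ε φ l = d := by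
    unfold markingDelta; linear_combination hZYY - l * hZYX
  refine ⟨?_, ha ▸ div_neg_of_neg_of_pos (by norm_num) (by linarith), ha ▸ hd ▸ htype⟩
  unfold markingCubic; linear_combination l * hZZX - hZZY

section SamePair

variable {α β γ δ ε φ l₁ l₂ l₃ : ℝ} (h12 : l₁ ≠ l₂) (h13 : l₁ ≠ l₃) (h23 : l₂ ≠ l₃)
  (hP₁ : markingCubic α β γ δ ε φ l₁ = 0) (hP₂ : markingCubic α β γ δ ε φ l₂ = 0)
  (hP₃ : markingCubic α β γ δ ε φ l₃ = 0)
include h12 h13 h23 hP₁ hP₂ hP₃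

theorem markingCubic_coeffs_of_three_roots :
    2 * γ - φ = -ε * (l₁ + l₂ + l₃) ∧ α - 2 * δ + 1 = ε * (l₁ * l₂ + l₁ * l₃ + l₂ * l₃) := by
  unfold markingCubic at hP₁ hP₂ hP₃
  exact cubic_coeffs_of_three_roots (d := -β) h12 h13 h23
    (by linear_combination hP₁) (by linear_combination hP₂) (by linear_combination hP₃)


theorem coeffs_of_typeI_pair (hd₁ : markingDelta γ δ ε φ l₁ = 1)
    (hd₂ : markingDelta γ δ ε φ l₂ = 1) :
    γ = -ε * l₃ ∧ φ = ε * (l₁ + l₂ - l₃) ∧ δ = 1 - ε * l₁ * l₂ ∧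
      α = 1 + ε * (l₃ * (l₁ + l₂) - l₁ * l₂) := by
  unfold markingDelta at hd₁ hd₂
  obtain ⟨hb, hc⟩ := quadratic_coeffs_of_two_roots (a := -ε) (b := φ - γ) (c := δ - 1) h12
    (by linear_combination hd₁) (by linear_combination hd₂)
  obtain ⟨hb', hc'⟩ := markingCubic_coeffs_of_three_roots h12 h13 h23 hP₁ hP₂ hP₃
  refine ⟨?_, ?_, ?_, ?_⟩
  · linear_combination hb + hb'
  · linear_combination 2 * hb + hb'
  · linear_combination hc
  · linear_combination hc' + 2 * hc

theorem coeffs_of_typeII_pair (hd₁ : markingDelta γ δ ε φ l₁ = 1 + markingAlpha α γ ε l₁)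
    (hd₂ : markingDelta γ δ ε φ l₂ = 1 + markingAlpha α γ ε l₂) :
    γ = ε * (l₃ - l₁ - l₂) ∧ φ = ε * (3 * l₃ - l₁ - l₂) ∧
      δ = -ε * (l₃ * (l₁ + l₂) - l₁ * l₂) ∧ α = -1 - ε * (l₃ * (l₁ + l₂) - 3 * l₁ * l₂) := by
  unfold markingDelta markingAlpha at hd₁ hd₂
  obtain ⟨hb, hc⟩ := quadratic_coeffs_of_two_roots (a := -2 * ε) (b := φ - 3 * γ)
    (c := δ - 1 - α) h12 (by linear_combination hd₁) (by linear_combination hd₂)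
  obtain ⟨hb', hc'⟩ := markingCubic_coeffs_of_three_roots h12 h13 h23 hP₁ hP₂ hP₃
  refine ⟨?_, ?_, ?_, ?_⟩
  · linear_combination -hb - hb'
  · linear_combination -2 * hb - 3 * hb'
  · linear_combination -hc - hc'
  · linear_combination -hc' - 2 * hc

theorem markingDelta_eq_markingAlpha_of_typeI_pair (hd₁ : markingDelta γ δ ε φ l₁ = 1)
    (hd₂ : markingDelta γ δ ε φ l₂ = 1) :
    markingDelta γ δ ε φ l₃ = markingAlpha α γ ε l₃ := by
  obtain ⟨rfl, rfl, rfl, rfl⟩ := coeffs_of_typeI_pair h12 h13 h23 hP₁ hP₂ hP₃ hd₁ hd₂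
  unfold markingDelta markingAlpha
  ring

theorem markingDelta_of_typeII_pair (hd₁ : markingDelta γ δ ε φ l₁ = 1 + markingAlpha α γ ε l₁)
    (hd₂ : markingDelta γ δ ε φ l₂ = 1 + markingAlpha α γ ε l₂) :
    markingDelta γ δ ε φ l₃ = ε * (l₃ - l₁) * (l₃ - l₂) ∧
      markingAlpha α γ ε l₃ = 3 * markingDelta γ δ ε φ l₃ - 1 := by
  obtain ⟨rfl, rfl, rfl, rfl⟩ := coeffs_of_typeII_pair h12 h13 h23 hP₁ hP₂ hP₃ hd₁ hd₂
  unfold markingDelta markingAlpha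
  constructor <;> ring


theorem false_of_typeI_pair (hd₁ : markingDelta γ δ ε φ l₁ = 1)
    (hd₂ : markingDelta γ δ ε φ l₂ = 1) (hneg₃ : markingAlpha α γ ε l₃ < 0)
    (htype₃ : markingDelta γ δ ε φ l₃ = 1 ∨
      markingDelta γ δ ε φ l₃ = 1 + markingAlpha α γ ε l₃) : False := by
  have h := markingDelta_eq_markingAlpha_of_typeI_pair h12 h13 h23 hP₁ hP₂ hP₃ hd₁ hd₂
  rcases htype₃ with h₃ | h₃ <;> linarith

theorem false_of_typeII_pair (hnd : ¬(γ = 0 ∧ ε = 0 ∧ φ = 0))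
    (hd₁ : markingDelta γ δ ε φ l₁ = 1 + markingAlpha α γ ε l₁)
    (hd₂ : markingDelta γ δ ε φ l₂ = 1 + markingAlpha α γ ε l₂)
    (hneg₃ : markingAlpha α γ ε l₃ < 0)
    (htype₃ : markingDelta γ δ ε φ l₃ = 1 ∨
      markingDelta γ δ ε φ l₃ = 1 + markingAlpha α γ ε l₃) : False := by
  obtain ⟨hd₃, ha₃⟩ := markingDelta_of_typeII_pair h12 h13 h23 hP₁ hP₂ hP₃ hd₁ hd₂
  rcases htype₃ with h₃ | h₃
  · linarith
  -- `δ = 1 + α = 3δ` gives `δ = 0`: a marking of type `II₀(1)`, which needs `ε = 0`.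
  · have hε : ε = 0 := by
      have h : ε * (l₃ - l₁) * (l₃ - l₂) = 0 := by linarith
      simpa [sub_eq_zero, h13.symm, h23.symm] using h
    obtain ⟨hγ, hφ, -, -⟩ := coeffs_of_typeII_pair h12 h13 h23 hP₁ hP₂ hP₃ hd₁ hd₂
    exact hnd ⟨by rw [hγ, hε, zero_mul], hε, by rw [hφ, hε, zero_mul]⟩

end SamePair

theorem false_of_isSpecialRoot_of_same_type {α β γ δ ε φ l₁ l₂ l₃ : ℝ}
    (hnd : ¬(γ = 0 ∧ ε = 0 ∧ φ = 0)) (h12 : l₁ ≠ l₂) (h13 : l₁ ≠ l₃) (h23 : l₂ ≠ l₃)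
    (hr₁ : IsSpecialRoot α β γ δ ε φ l₁) (hr₂ : IsSpecialRoot α β γ δ ε φ l₂)
    (hr₃ : IsSpecialRoot α β γ δ ε φ l₃)
    (htype : markingDelta γ δ ε φ l₁ = 1 ↔ markingDelta γ δ ε φ l₂ = 1) : False := by
  obtain ⟨hP₁, -, htype₁⟩ := hr₁
  obtain ⟨hP₂, -, htype₂⟩ := hr₂
  obtain ⟨hP₃, hneg₃, htype₃⟩ := hr₃
  by_cases hI : markingDelta γ δ ε φ l₁ = 1
  · exact false_of_typeI_pair h12 h13 h23 hP₁ hP₂ hP₃ hI (htype.1 hI) hneg₃ htype₃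
  · exact false_of_typeII_pair h12 h13 h23 hP₁ hP₂ hP₃ hnd (htype₁.resolve_left hI)
      (htype₂.resolve_left (mt htype.2 hI)) hneg₃ htype₃

/-- a left-invariant connection on `Aff₀(ℝ)` (with parameters
`(γ,ε,φ) ≠ (0,0,0)`) cannot have three special markings. -/
theorem stmt19 (D : Pl →ₗ[ℝ] Pl →ₗ[ℝ] Pl) (α β γ δ ε φ : ℝ)
    (h1 : D Xv Xv = α • Xv + β • Yv)
    (h2 : D Xv Yv = γ • Xv + δ • Yv)
    (h3 : D Yv Xv = D Xv Yv - Yv)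
    (h4 : D Yv Yv = ε • Xv + φ • Yv)
    (hnd : ¬(γ = 0 ∧ ε = 0 ∧ φ = 0))
    (l₁ l₂ l₃ : ℝ) (h12 : l₁ ≠ l₂) (h13 : l₁ ≠ l₃) (h23 : l₂ ≠ l₃)
    (s1 : SpecialMarking D l₁) (s2 : SpecialMarking D l₂)
    (s3 : SpecialMarking D l₃) : False := by
  have r1 := s1.isSpecialRoot h1 h2 h3 h4
  have r2 := s2.isSpecialRoot h1 h2 h3 h4
  have r3 := s3.isSpecialRoot h1 h2 h3 h4
  have pigeonhole : (markingDelta γ δ ε φ l₁ = 1 ↔ markingDelta γ δ ε φ l₂ = 1) ∨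
      (markingDelta γ δ ε φ l₁ = 1 ↔ markingDelta γ δ ε φ l₃ = 1) ∨
      (markingDelta γ δ ε φ l₂ = 1 ↔ markingDelta γ δ ε φ l₃ = 1) := by
    tauto
  rcases pigeonhole with h | h | h
  · exact false_of_isSpecialRoot_of_same_type hnd h12 h13 h23 r1 r2 r3 h
  · exact false_of_isSpecialRoot_of_same_type hnd h13 h12 h23.symm r1 r3 r2 h
  · exact false_of_isSpecialRoot_of_same_type hnd h23 h12.symm h13.symm r2 r3 r1 h
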